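/- arXiv:2106.00114 — 2 statements merged into one kernel-verified Lean document; each statement's English description precedes it below -/
import Mathlib

section
/- If X ∈ L, then for every n ≥ 1 and every B ∈ σ(K), P(X_{n+1} ∈ B | F_n) = (θ ν(B) + Σ_{i=1}^n δ_{X_i}(B)) / (n + θ) a.s., where δ_x is the unit mass at x. -/
open MeasureTheory ProbabilityTheory Filter Set ENNReal NNReal

noncomputable section

variable {Ω S : Type*}

/-- `K` is a regular conditional distribution for `ν` given the sub-σ-field `G`. -/
def IsRCD [mS : MeasurableSpace S] (ν : Measure S) (K : S → Measure S)
    (G : MeasurableSpace S) : Prop :=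
  G ≤ mS ∧ @Measurable S (@Measure S mS) mS inferInstance K ∧
    (∀ x, IsProbabilityMeasure (K x)) ∧
    (∀ A : Set S, MeasurableSet[mS] A → Measurable[G] fun x => K x A) ∧
    (∀ A : Set S, MeasurableSet[mS] A → ∀ g : Set S, MeasurableSet[G] g →
      ν (A ∩ g) = ∫⁻ x in g, K x A ∂ν)

/-- `σ(X_0, …, X_{n-1})`, the σ-field generated by the first `n` variables. -/
def Filtr [mS : MeasurableSpace S] (X : ℕ → Ω → S) (n : ℕ) : MeasurableSpace Ω :=
  ⨆ i : Fin n, mS.comap (X i)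

/-- The predictive probability `(θ ν(A) + ∑_{i<n} K(X_i)(A)) / (n + θ)`. -/
def predReal [MeasurableSpace S] (X : ℕ → Ω → S) (ν : Measure S) (θ : ℝ)
    (K : S → Measure S) (n : ℕ) (ω : Ω) (A : Set S) : ℝ :=
  (θ * (ν A).toReal + ∑ i ∈ Finset.range n, (K (X i ω) A).toReal) / (n + θ)

/-- Condition (1.1): `X_1 ∼ ν` and the predictive distributions are
`(θ ν + ∑_{i≤n} K(X_i))/(n+θ)`. -/
def Cond11 [MeasurableSpace Ω] [MeasurableSpace S] (P : Measure Ω) (X : ℕ → Ω → S)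
    (ν : Measure S) (θ : ℝ) (K : S → Measure S) : Prop :=
  (∀ n, Measurable (X n)) ∧ P.map (X 0) = ν ∧
    ∀ n : ℕ, 1 ≤ n → ∀ A : Set S, MeasurableSet A →
      P[((X n) ⁻¹' A).indicator (fun _ => (1 : ℝ)) | Filtr X n]
        =ᵐ[P] fun ω => predReal X ν θ K n ω A

/-- `X ∈ L`: condition (1.1) holds and `K` is an r.c.d. for `ν` given some sub-σ-field. -/
def MemL [MeasurableSpace Ω] [mS : MeasurableSpace S] (P : Measure Ω) (X : ℕ → Ω → S)
    (ν : Measure S) (θ : ℝ) (K : S → Measure S) : Prop :=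
  Cond11 P X ν θ K ∧ ∃ G : MeasurableSpace S, IsRCD (mS := mS) ν K G

/-- `μ` is a random probability measure directing `X`:
`μ(A) = lim_n (1/n) ∑_{i≤n} 1_A(X_i)` a.s. for every `A`. -/
def IsDirecting [MeasurableSpace Ω] [MeasurableSpace S] (P : Measure Ω) (X : ℕ → Ω → S)
    (μ : Ω → Measure S) : Prop :=
  Measurable μ ∧ (∀ ω, IsProbabilityMeasure (μ ω)) ∧
    ∀ A : Set S, MeasurableSet A →
      ∀ᵐ ω ∂P, Tendsto
        (fun n : ℕ => (∑ i ∈ Finset.range n, A.indicator (fun _ => (1 : ℝ)) (X i ω)) / n)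
        atTop (nhds ((μ ω A).toReal))

/-- Exchangeability of the sequence `X`. -/
def Exchangeable [MeasurableSpace Ω] [MeasurableSpace S] (P : Measure Ω)
    (X : ℕ → Ω → S) : Prop :=
  ∀ n : ℕ, ∀ τ : Equiv.Perm (Fin n),
    P.map (fun ω (i : Fin n) => X (τ i) ω) = P.map (fun ω (i : Fin n) => X i ω)

/-- The Beta(1, θ) law on ℝ, with density `w ↦ θ (1-w)^(θ-1)` on `(0,1)`. -/
def betaOneMeasure (θ : ℝ) : Measure ℝ :=
  (volume : Measure ℝ).withDensity
    ((Set.Ioo (0 : ℝ) 1).indicator fun w => ENNReal.ofReal (θ * (1 - w) ^ (θ - 1)))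

/-- `σ` is the stick-breaking law with parameter `θ` on sequences:
the law of `(T_n)` where `T_n = W_n ∏_{i<n} (1 - W_i)` and `(W_n)` is i.i.d. Beta(1, θ). -/
def IsStickBreakingLaw (θ : ℝ) (σ : Measure (ℕ → ℝ)) : Prop :=
  ∃ (Ω' : Type) (_ : MeasurableSpace Ω') (Q : Measure Ω') (W : ℕ → Ω' → ℝ),
    IsProbabilityMeasure Q ∧ (∀ n, Measurable (W n)) ∧
    iIndepFun W Q ∧ (∀ n, Q.map (W n) = betaOneMeasure θ) ∧
    σ = Q.map fun ω' (j : ℕ) => W j ω' * ∏ i ∈ Finset.range j, (1 - W i ω')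

/-- `(V_n)` has the stick-breaking distribution with parameter `θ`. -/
def IsStickBreaking [MeasurableSpace Ω] (P : Measure Ω) (θ : ℝ) (V : ℕ → Ω → ℝ) : Prop :=
  ∃ σ : Measure (ℕ → ℝ), IsStickBreakingLaw θ σ ∧ P.map (fun ω (j : ℕ) => V j ω) = σ

/-- The random measure `∑_j V_j K(Z_j)`. -/
def mixSum [MeasurableSpace S] (K : S → Measure S) (V : ℕ → Ω → ℝ) (Z : ℕ → Ω → S)
    (ω : Ω) : Measure S :=
  Measure.sum fun j => ENNReal.ofReal (V j ω) • K (Z j ω)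

/-- `σ(K)`: the sub-σ-field of `S` generated by the kernel `K`. -/
def sigmaK [mS : MeasurableSpace S] (K : S → Measure S) : MeasurableSpace S :=
  MeasurableSpace.comap K inferInstance

/-- `γ` is the `p`-dimensional Gaussian law `N_p(0, M)`: every linear functional
`y ↦ ∑ i, b i * y i` has the one-dimensional Gaussian law with mean `0` and
variance `bᵀ M b`. -/
def IsGaussN {p : ℕ} (M : Matrix (Fin p) (Fin p) ℝ)
    (γ : Measure (EuclideanSpace ℝ (Fin p))) : Prop :=
  ∀ b : Fin p → ℝ,
    γ.map (fun y => ∑ i, b i * y i) =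
      gaussianReal 0 (Real.toNNReal (∑ i, ∑ j, b i * M i j * b j))

/-- The matrix of second moments `(∫ y_i y_j dλ)_{i,j}` of a measure `λ` on `ℝ^p`. -/
def covMatrix {p : ℕ} (lam : Measure (EuclideanSpace ℝ (Fin p))) :
    Matrix (Fin p) (Fin p) ℝ :=
  Matrix.of fun i j => ∫ y, y i * y j ∂lam

/-- The σ-field of measurable sets invariant under every `f i`. -/
def invariantSigma {ι : Type*} [mS : MeasurableSpace S] (f : ι → S → S) :
    MeasurableSpace S where
  MeasurableSet' A := MeasurableSet[mS] A ∧ ∀ i, f i ⁻¹' A = A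
  measurableSet_empty := ⟨MeasurableSet.empty, fun _ => Set.preimage_empty⟩
  measurableSet_compl A hA := ⟨hA.1.compl, fun i => by rw [Set.preimage_compl, hA.2 i]⟩
  measurableSet_iUnion g hg := ⟨MeasurableSet.iUnion fun k => (hg k).1,
    fun i => by rw [Set.preimage_iUnion]; exact Set.iUnion_congr fun k => (hg k).2 i⟩

/-! If `B ∈ σ(K) ⊆ G`, the r.c.d. property forces `K x B = 1_B x` for `ν`-a.e. `x`: the function
`K · B ≤ 1` integrates to `ν B` over `B` and to `0` over `Bᶜ`. Taking expectations in (1.1) and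
using `∫ K x A ∂ν = ν A` shows by induction that every `X i` has law `ν`, so `K (X i) B` and
`δ_{X i} B` agree a.s., and (1.1) for `A = B` is the claim. -/

namespace IsRCD

variable {G mS : MeasurableSpace S} {ν : Measure S} {K : S → Measure S}

lemma sigmaK_le (h : IsRCD ν K G) : sigmaK K ≤ G := by
  rintro _ ⟨C, hC, rfl⟩
  exact Measure.measurable_of_measurable_coe (mβ := G) K h.2.2.2.1 hC

lemma measurable_apply (h : IsRCD ν K G) {A : Set S} (hA : MeasurableSet A) :
    Measurable fun x => K x A :=
  (h.2.2.2.1 A hA).mono h.1 le_rfl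

lemma setLIntegral_apply (h : IsRCD ν K G) {A g : Set S} (hA : MeasurableSet A)
    (hg : MeasurableSet[G] g) : ∫⁻ x in g, K x A ∂ν = ν (A ∩ g) :=
  (h.2.2.2.2 A hA g hg).symm

lemma lintegral_apply (h : IsRCD ν K G) {A : Set S} (hA : MeasurableSet A) :
    ∫⁻ x, K x A ∂ν = ν A := by
  simpa using h.setLIntegral_apply hA MeasurableSet.univ

lemma ae_apply_eq_indicator [IsFiniteMeasure ν] (h : IsRCD ν K G) {B : Set S}
    (hB : MeasurableSet[G] B) : ∀ᵐ x ∂ν, K x B = B.indicator 1 x := by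
  have hBm : MeasurableSet B := h.1 B hB
  have hle : ∀ x, K x B ≤ 1 := fun x =>
    have := h.2.2.1 x; prob_le_one
  have h_in : ∀ᵐ x ∂ν.restrict B, K x B = 1 := by
    refine ae_eq_of_ae_le_of_lintegral_le (ae_of_all _ hle) ?_ aemeasurable_const ?_
    all_goals rw [h.setLIntegral_apply hBm hB, inter_self]
    · exact measure_ne_top ν B
    · simp
  have h_out : ∀ᵐ x ∂ν.restrict Bᶜ, K x B = 0 := by
    refine (lintegral_eq_zero_iff (h.measurable_apply hBm)).mp ?_
    rw [h.setLIntegral_apply hBm hB.compl, inter_compl_self, measure_empty]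
  filter_upwards [(ae_restrict_iff' hBm).mp h_in, (ae_restrict_iff' hBm.compl).mp h_out]
    with x hx_in hx_out
  by_cases hx : x ∈ B
  · simp [hx, hx_in hx]
  · simp [hx, hx_out hx]

end IsRCD

section Marginals

variable {mΩ : MeasurableSpace Ω} {mS : MeasurableSpace S} {P : Measure Ω} {ν : Measure S}
  {K : S → Measure S}

lemma integrable_toReal_apply_comp [IsFiniteMeasure P] (hK1 : ∀ x, IsProbabilityMeasure (K x))
    {Y : Ω → S} (hY : Measurable Y) {A : Set S} (hKA : Measurable fun x => K x A) :
    Integrable (fun ω => (K (Y ω) A).toReal) P := by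
  refine .of_bound (hKA.comp hY).ennreal_toReal.aestronglyMeasurable 1 (ae_of_all _ fun ω => ?_)
  have := hK1 (Y ω)
  simpa using ENNReal.toReal_mono one_ne_top prob_le_one

lemma integral_toReal_apply_comp (hK1 : ∀ x, IsProbabilityMeasure (K x)) {Y : Ω → S}
    (hY : Measurable Y) (hlaw : P.map Y = ν) {A : Set S} (hKA : Measurable fun x => K x A)
    (hinv : ∫⁻ x, K x A ∂ν = ν A) :
    ∫ ω, (K (Y ω) A).toReal ∂P = (ν A).toReal := by
  have hKAY : Measurable fun ω => K (Y ω) A := hKA.comp hY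
  rw [integral_toReal hKAY.aemeasurable
    (ae_of_all _ fun ω => have := hK1 (Y ω); measure_lt_top _ _), ← lintegral_map hKA hY, hlaw,
    hinv]

lemma integral_predReal [IsProbabilityMeasure P] (hK1 : ∀ x, IsProbabilityMeasure (K x))
    {X : ℕ → Ω → S} (hX : ∀ i, Measurable (X i)) (θ : ℝ) (n : ℕ) {A : Set S}
    (hKA : Measurable fun x => K x A) :
    ∫ ω, predReal X ν θ K n ω A ∂P =
      (θ * (ν A).toReal + ∑ i ∈ Finset.range n, ∫ ω, (K (X i ω) A).toReal ∂P) / (n + θ) := by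
  have hint : ∀ i ∈ Finset.range n, Integrable (fun ω => (K (X i ω) A).toReal) P :=
    fun i _ => integrable_toReal_apply_comp hK1 (hX i) hKA
  simp only [predReal]
  rw [integral_div, integral_add (integrable_const _) (integrable_finsetSum _ hint),
    integral_finsetSum _ hint, integral_const, probReal_univ, one_smul]

theorem Cond11.map_eq [IsProbabilityMeasure P] [IsFiniteMeasure ν] {X : ℕ → Ω → S} {θ : ℝ}
    (hθ : 0 < θ) (hK1 : ∀ x, IsProbabilityMeasure (K x))
    (hK : ∀ A, MeasurableSet A → Measurable fun x => K x A)
    (hinv : ∀ A, MeasurableSet A → ∫⁻ x, K x A ∂ν = ν A) (hc : Cond11 P X ν θ K) (n : ℕ) :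
    P.map (X n) = ν := by
  induction n using Nat.strong_induction_on with
  | _ n ih =>
  rcases Nat.eq_zero_or_pos n with rfl | hn
  · exact hc.2.1
  ext A hA
  have hm : Filtr X n ≤ mΩ := iSup_le fun j => (hc.1 j).comap_le
  have h_pred : (P (X n ⁻¹' A)).toReal = ∫ ω, predReal X ν θ K n ω A ∂P := by
    rw [← integral_congr_ae (hc.2.2 n hn A hA), integral_condExp hm,
      integral_indicator_const _ (hc.1 n hA), smul_eq_mul, mul_one, measureReal_def]
  have h_terms : ∀ i ∈ Finset.range n, ∫ ω, (K (X i ω) A).toReal ∂P = (ν A).toReal :=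
    fun i hi => integral_toReal_apply_comp hK1 (hc.1 i) (ih i (Finset.mem_range.mp hi))
      (hK A hA) (hinv A hA)
  rw [Measure.map_apply (hc.1 n) hA,
    ← ENNReal.toReal_eq_toReal_iff' (measure_ne_top _ _) (measure_ne_top _ _), h_pred,
    integral_predReal hK1 hc.1 θ n (hK A hA), Finset.sum_congr rfl h_terms, Finset.sum_const,
    Finset.card_range, nsmul_eq_mul]
  field_simp
  ring

end Marginals

namespace MemL

variable {mΩ : MeasurableSpace Ω} {mS : MeasurableSpace S} {P : Measure Ω} {X : ℕ → Ω → S}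
  {ν : Measure S} {θ : ℝ} {K : S → Measure S}

theorem map_eq [IsProbabilityMeasure P] [IsFiniteMeasure ν] (hθ : 0 < θ)
    (hL : MemL P X ν θ K) (n : ℕ) : P.map (X n) = ν := by
  obtain ⟨hc, G, hG⟩ := hL
  exact hc.map_eq hθ hG.2.2.1 (fun _ => hG.measurable_apply) (fun _ => hG.lintegral_apply) n

lemma measurableSet_of_sigmaK (hL : MemL P X ν θ K) {B : Set S}
    (hB : MeasurableSet[sigmaK K] B) : MeasurableSet B := by
  obtain ⟨-, G, hG⟩ := hL
  exact hG.1 B (hG.sigmaK_le B hB)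

lemma ae_apply_eq_dirac [IsFiniteMeasure ν] (hL : MemL P X ν θ K) {B : Set S}
    (hB : MeasurableSet[sigmaK K] B) : ∀ᵐ x ∂ν, K x B = Measure.dirac x B := by
  have h_ind : ∀ᵐ x ∂ν, K x B = B.indicator 1 x := by
    obtain ⟨-, G, hG⟩ := hL
    exact hG.ae_apply_eq_indicator (hG.sigmaK_le B hB)
  filter_upwards [h_ind] with x hx
  rw [hx, Measure.dirac_apply' _ (hL.measurableSet_of_sigmaK hB)]

end MemL

theorem stmt_7_general {Ω S : Type*} [MeasurableSpace Ω] [mS : MeasurableSpace S]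
    (P : Measure Ω) [IsProbabilityMeasure P] (X : ℕ → Ω → S) (ν : Measure S)
    [IsProbabilityMeasure ν] (θ : ℝ) (hθ : 0 < θ) (K : S → Measure S)
    (hL : MemL P X ν θ K) :
    ∀ n : ℕ, 1 ≤ n → ∀ B : Set S, MeasurableSet[sigmaK K] B →
      P[((X n) ⁻¹' B).indicator (fun _ => (1 : ℝ)) | Filtr X n]
        =ᵐ[P] fun ω =>
          (θ * (ν B).toReal + ∑ i ∈ Finset.range n, (Measure.dirac (X i ω) B).toReal) /
            (n + θ) := by
  intro n hn B hB
  have hX := hL.1.1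
  have h_dirac : ∀ᵐ ω ∂P, ∀ i ∈ Finset.range n, K (X i ω) B = Measure.dirac (X i ω) B := by
    refine (eventually_all_finset _).mpr fun i _ => ?_
    have h_law := hL.ae_apply_eq_dirac hB
    rw [← hL.map_eq hθ i] at h_law
    exact ae_of_ae_map (hX i).aemeasurable h_law
  filter_upwards [hL.1.2.2 n hn B (hL.measurableSet_of_sigmaK hB), h_dirac] with ω h_pred hω
  rw [h_pred, predReal, Finset.sum_congr rfl fun i hi => by rw [hω i hi]]

theorem stmt_7 {Ω S : Type*} [MeasurableSpace Ω] [mS : MeasurableSpace S] [StandardBorelSpace S]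
    (P : Measure Ω) [IsProbabilityMeasure P] (X : ℕ → Ω → S) (ν : Measure S)
    [IsProbabilityMeasure ν] (θ : ℝ) (hθ : 0 < θ) (K : S → Measure S)
    (hL : MemL P X ν θ K) :
    ∀ n : ℕ, 1 ≤ n → ∀ B : Set S, MeasurableSet[sigmaK K] B →
      P[((X n) ⁻¹' B).indicator (fun _ => (1 : ℝ)) | Filtr X n]
        =ᵐ[P] fun ω =>
          (θ * (ν B).toReal + ∑ i ∈ Finset.range n, (Measure.dirac (X i ω) B).toReal) /
            (n + θ) :=
  stmt_7_general (mS := mS) P X ν θ hθ K hL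

end
end

section
/- Suppose X ∈ L. Then for each fixed A ∈ B: (1/n) Σ_{i=1}^n K(X_i)(A) → μ(A) a.s. as n → ∞, and ∫_S K(x)(A) μ(dx) = μ(A) a.s. -/
open MeasureTheory ProbabilityTheory Filter Set ENNReal NNReal

noncomputable section

variable {Ω S : Type*}

/-! Condition (1.1) says that, on `F_n`-events, `X_n` is a draw from the predictive measure
`(θ ν + ∑_{i<n} K(X_i)) / (n + θ)`. Since `K` is an r.c.d. given `G` and `K(·)(A)` is
`G`-measurable, `∫ K(y)(A) K(x)(dy) = K(x)(A)` for `ν`-a.e. `x`; as every `X_i` has law `ν`,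
the predictive measure is therefore reproduced by `K`, i.e.
`E[K(X_n)(A) | F_n] = E[1_A(X_n) | F_n]`. So `d_n = K(X_n)(A) - 1_A(X_n)` are bounded
martingale differences, hence orthogonal, and their averages tend to `0` in `L²`. On the other
hand, approximating `K(·)(A)` by its level sets and using that `μ` directs `X`, these averages
converge a.s. to `∫ K(x)(A) μ(dx) - μ(A)`, which must then vanish. -/

lemma abs_sum_range_div_le {a : ℕ → ℝ} {C : ℝ} (hC : 0 ≤ C) (ha : ∀ i, |a i| ≤ C) (n : ℕ) :
    |(∑ i ∈ Finset.range n, a i) / n| ≤ C := by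
  rcases Nat.eq_zero_or_pos n with rfl | hn
  · simpa using hC
  rw [abs_div, Nat.abs_cast, div_le_iff₀ (by exact_mod_cast hn)]
  exact (Finset.abs_sum_le_sum_abs _ _).trans <|
    (Finset.sum_le_sum fun i _ => ha i).trans_eq (by simp [mul_comm])

lemma tendsto_of_forall_approx {u : ℕ → ℝ} {c : ℝ} {v : ℕ → ℕ → ℝ} {w : ℕ → ℝ}
    (hv : ∀ N, Tendsto (v N) atTop (nhds (w N))) (huv : ∀ N n, |u n - v N n| ≤ 1 / (N + 1))
    (hw : ∀ N, |w N - c| ≤ 1 / (N + 1)) : Tendsto u atTop (nhds c) := by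
  rw [Metric.tendsto_atTop]
  intro ε hε
  obtain ⟨N, hN⟩ := exists_nat_one_div_lt (show 0 < ε / 3 by positivity)
  obtain ⟨n₀, hn₀⟩ := Metric.tendsto_atTop.1 (hv N) (ε / 3) (by positivity)
  refine ⟨n₀, fun n hn => ?_⟩
  have h1 := huv N n
  have h2 := hn₀ n hn
  have h3 := hw N
  rw [Real.dist_eq] at h2 ⊢
  calc |u n - c| = |(u n - v N n) + (v N n - w N) + (w N - c)| := by ring_nf
    _ ≤ |u n - v N n| + |v N n - w N| + |w N - c| := abs_add_three _ _ _
    _ < ε := by linarith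

lemma sum_range_ite_le_eq_floor {t : ℝ} (ht : 0 ≤ t) {N : ℕ} (htN : t ≤ N) :
    ∑ k ∈ Finset.range N, (if (k + 1 : ℝ) ≤ t then (1 : ℝ) else 0) = ⌊t⌋₊ := by
  have hiff : ∀ k : ℕ, (k + 1 : ℝ) ≤ t ↔ k < ⌊t⌋₊ := fun k => by
    rw [Nat.lt_iff_add_one_le, Nat.le_floor_iff ht]; push_cast; rfl
  have hfilter : (Finset.range N).filter (· < ⌊t⌋₊) = Finset.range ⌊t⌋₊ := by
    ext k; simp only [Finset.mem_filter, Finset.mem_range]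
    have := Nat.floor_le_of_le htN; omega
  simp_rw [hiff]
  rw [Finset.sum_boole, hfilter, Finset.card_range]

lemma tendsto_avg_of_tendsto_avg_indicator [MeasurableSpace S] {x : ℕ → S} {m : Measure S}
    [IsProbabilityMeasure m] {H : S → ℝ} (hH : Measurable H) (h0 : ∀ y, 0 ≤ H y)
    (h1 : ∀ y, H y ≤ 1)
    (hx : ∀ q : ℚ, Tendsto (fun n : ℕ =>
      (∑ i ∈ Finset.range n, {y | (q : ℝ) ≤ H y}.indicator (fun _ => (1 : ℝ)) (x i)) / n)
      atTop (nhds (m {y | (q : ℝ) ≤ H y}).toReal)) :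
    Tendsto (fun n : ℕ => (∑ i ∈ Finset.range n, H (x i)) / n) atTop (nhds (∫ y, H y ∂m)) := by
  set B : ℕ → ℕ → Set S := fun N k => {y | (((k + 1 : ℚ) / (N + 1) : ℚ) : ℝ) ≤ H y}
  have hB : ∀ N k, MeasurableSet (B N k) := fun N k => measurableSet_le measurable_const hH
  -- `s N` rounds `H` down to the grid `(1/(N+1)) ℤ`, written as a sum of level-set indicators
  set s : ℕ → S → ℝ := fun N y =>
    ∑ k ∈ Finset.range (N + 1), (B N k).indicator (fun _ => (1 : ℝ)) y / (N + 1)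
  have hs : ∀ N y, s N y = ⌊(N + 1) * H y⌋₊ / (N + 1) := by
    intro N y
    have hN : (0 : ℝ) < N + 1 := by positivity
    simp only [s, ← Finset.sum_div]
    congr 1
    rw [← sum_range_ite_le_eq_floor (N := N + 1) (by positivity [h0 y])
      (by push_cast; nlinarith [h1 y])]
    refine Finset.sum_congr rfl fun k _ => ?_
    simp only [B, Set.indicator_apply, Set.mem_ofPred_eq]
    push_cast
    simp only [div_le_iff₀' hN]
  have hsH : ∀ N y, |s N y - H y| ≤ 1 / (N + 1) := by
    intro N y
    have hN : (0 : ℝ) < N + 1 := by positivity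
    have hlo := Nat.floor_le (mul_nonneg hN.le (h0 y))
    have hhi := Nat.lt_floor_add_one ((N + 1) * H y)
    rw [hs, abs_le, div_sub' hN.ne', ← neg_div]
    exact ⟨div_le_div_of_nonneg_right (by linarith) hN.le,
      div_le_div_of_nonneg_right (by linarith) hN.le⟩
  have hsm : ∀ N, Integrable (s N) m := fun N => integrable_finsetSum _ fun k _ =>
    ((integrable_const 1).indicator (hB N k)).div_const _
  have hHm : Integrable H m := .of_bound hH.aestronglyMeasurable 1 (ae_of_all _ fun y => by
    rw [Real.norm_of_nonneg (h0 y)]; exact h1 y)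
  refine tendsto_of_forall_approx (v := fun N n => (∑ i ∈ Finset.range n, s N (x i)) / n)
    (w := fun N => ∫ y, s N y ∂m) (fun N => ?_) (fun N n => ?_) (fun N => ?_)
  · have havg : ∀ n : ℕ, (∑ i ∈ Finset.range n, s N (x i)) / n = ∑ k ∈ Finset.range (N + 1),
        (∑ i ∈ Finset.range n, (B N k).indicator (fun _ => (1 : ℝ)) (x i)) / n / (N + 1) := by
      intro n
      simp only [s]
      rw [Finset.sum_comm, Finset.sum_div]
      refine Finset.sum_congr rfl fun k _ => ?_
      rw [← Finset.sum_div, div_right_comm]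
    have hint : ∫ y, s N y ∂m = ∑ k ∈ Finset.range (N + 1), (m (B N k)).toReal / (N + 1) := by
      simp only [s]
      rw [integral_finsetSum _ fun k _ => ((integrable_const 1).indicator (hB N k)).div_const _]
      refine Finset.sum_congr rfl fun k _ => ?_
      rw [integral_div, integral_indicator (hB N k), setIntegral_const, smul_eq_mul, mul_one,
        Measure.real]
    simp_rw [havg, hint]
    exact tendsto_finsetSum _ fun k _ => (hx _).div_const _
  · rw [← _root_.sub_div, ← Finset.sum_sub_distrib]
    exact abs_sum_range_div_le (by positivity) (fun i => by rw [abs_sub_comm]; exact hsH N _) n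
  · rw [← integral_sub (hsm N) hHm, ← Real.norm_eq_abs]
    simpa using norm_integral_le_of_norm_le_const (μ := m) (f := fun y => s N y - H y)
      (ae_of_all m fun y => hsH N y)

lemma integral_mul_eq_zero_of_setIntegral_eq_zero {m m₀ : MeasurableSpace Ω} {μ : Measure Ω}
    [IsFiniteMeasure μ] (hm : m ≤ m₀) {f g : Ω → ℝ} (hf : Integrable f μ)
    (hg : StronglyMeasurable[m] g) (hgf : Integrable (g * f) μ)
    (h : ∀ s, MeasurableSet[m] s → ∫ x in s, f x ∂μ = 0) : ∫ x, g x * f x ∂μ = 0 := by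
  have hf0 : μ[f | m] =ᵐ[μ] 0 :=
    (ae_eq_condExp_of_forall_setIntegral_eq hm hf (fun _ _ _ => integrableOn_zero)
      (fun s hs _ => by simp [h s hs]) aestronglyMeasurable_zero).symm
  calc ∫ x, g x * f x ∂μ = ∫ x, μ[g * f | m] x ∂μ := (integral_condExp hm).symm
    _ = ∫ x, (g * μ[f | m]) x ∂μ :=
      integral_congr_ae (condExp_mul_of_stronglyMeasurable_left hg hgf hf)
    _ = ∫ x, (g * 0 : Ω → ℝ) x ∂μ := integral_congr_ae ((ae_eq_refl g).mul hf0)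
    _ = 0 := by simp

section orthogonalSequence

variable [MeasurableSpace Ω] {μ : Measure Ω}

lemma ae_eq_zero_of_tendsto_of_integral_sq_le {Y : ℕ → Ω → ℝ} {D : Ω → ℝ} {c : ℕ → ℝ}
    (hY : ∀ n, Measurable (Y n)) (hYint : ∀ n, Integrable (fun ω => Y n ω ^ 2) μ)
    (hle : ∀ n, ∫ ω, Y n ω ^ 2 ∂μ ≤ c n) (hc : Tendsto c atTop (nhds 0))
    (hlim : ∀ᵐ ω ∂μ, Tendsto (fun n => Y n ω) atTop (nhds (D ω))) : D =ᵐ[μ] 0 := by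
  have hYsq : ∀ n, Measurable fun ω => ENNReal.ofReal (Y n ω ^ 2) := fun n =>
    ((hY n).pow_const 2).ennreal_ofReal
  have hFD : ∀ᵐ ω ∂μ,
      liminf (fun n => ENNReal.ofReal (Y n ω ^ 2)) atTop = ENNReal.ofReal (D ω ^ 2) :=
    hlim.mono fun ω h => ((ENNReal.continuous_ofReal.tendsto _).comp (h.pow 2)).liminf_eq
  have hF0 : ∫⁻ ω, liminf (fun n => ENNReal.ofReal (Y n ω ^ 2)) atTop ∂μ = 0 := by
    refine le_antisymm ?_ bot_le
    calc _ ≤ liminf (fun n => ∫⁻ ω, ENNReal.ofReal (Y n ω ^ 2) ∂μ) atTop :=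
          lintegral_liminf_le hYsq
      _ ≤ liminf (fun n => ENNReal.ofReal (c n)) atTop := liminf_le_liminf <|
          .of_forall fun n => by
            rw [← ofReal_integral_eq_lintegral_ofReal (hYint n) (ae_of_all _ fun _ => sq_nonneg _)]
            exact ENNReal.ofReal_le_ofReal (hle n)
      _ = 0 := ((ENNReal.continuous_ofReal.tendsto 0).comp hc).liminf_eq.trans ENNReal.ofReal_zero
  filter_upwards [(lintegral_eq_zero_iff (Measurable.liminf hYsq)).1 hF0, hFD] with ω h0 hD
  rw [hD, Pi.zero_apply, ENNReal.ofReal_eq_zero] at h0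
  exact pow_eq_zero_iff two_ne_zero |>.1 (le_antisymm h0 (sq_nonneg _))

variable [IsProbabilityMeasure μ] {d : ℕ → Ω → ℝ}

lemma integral_sq_sum_le_of_orthogonal (hd : ∀ j, Measurable (d j)) (hd1 : ∀ j ω, |d j ω| ≤ 1)
    (horth : ∀ i j, i < j → ∫ ω, d i ω * d j ω ∂μ = 0) (n : ℕ) :
    ∫ ω, (∑ j ∈ Finset.range n, d j ω) ^ 2 ∂μ ≤ n := by
  have hbound : ∀ i j ω, |d i ω * d j ω| ≤ 1 := fun i j ω => by
    rw [abs_mul]; exact mul_le_one₀ (hd1 i ω) (abs_nonneg _) (hd1 j ω)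
  have hint : ∀ i j, Integrable (fun ω => d i ω * d j ω) μ := fun i j =>
    .of_bound ((hd i).mul (hd j)).aestronglyMeasurable 1 (ae_of_all _ (hbound i j))
  have horth' : ∀ i j, j ≠ i → ∫ ω, d i ω * d j ω ∂μ = 0 := fun i j hji => by
    rcases hji.lt_or_gt with h | h
    · simpa only [mul_comm] using horth j i h
    · exact horth i j h
  calc ∫ ω, (∑ j ∈ Finset.range n, d j ω) ^ 2 ∂μ
      = ∑ i ∈ Finset.range n, ∑ j ∈ Finset.range n, ∫ ω, d i ω * d j ω ∂μ := by
        simp_rw [sq, Finset.sum_mul_sum]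
        rw [integral_finsetSum _ fun i _ => integrable_finsetSum _ fun j _ => hint i j]
        exact Finset.sum_congr rfl fun i _ => integral_finsetSum _ fun j _ => hint i j
    _ = ∑ i ∈ Finset.range n, ∫ ω, d i ω * d i ω ∂μ :=
        Finset.sum_congr rfl fun i hi =>
          Finset.sum_eq_single_of_mem i hi fun j _ hji => horth' i j hji
    _ ≤ ∑ _i ∈ Finset.range n, (1 : ℝ) := Finset.sum_le_sum fun i _ =>
        (integral_mono (hint i i) (integrable_const 1) fun ω => (le_abs_self _).trans
          (hbound i i ω)).trans_eq (by simp)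
    _ = n := by simp

lemma ae_eq_zero_of_tendsto_avg_of_orthogonal {D : Ω → ℝ} (hd : ∀ j, Measurable (d j))
    (hd1 : ∀ j ω, |d j ω| ≤ 1) (horth : ∀ i j, i < j → ∫ ω, d i ω * d j ω ∂μ = 0)
    (hlim : ∀ᵐ ω ∂μ, Tendsto (fun n : ℕ => (∑ j ∈ Finset.range n, d j ω) / n) atTop
      (nhds (D ω))) : D =ᵐ[μ] 0 := by
  have hS : ∀ n, Measurable fun ω => ∑ j ∈ Finset.range n, d j ω := fun n =>
    Finset.measurable_sum _ fun j _ => hd j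
  have hSint : ∀ n : ℕ, Integrable (fun ω => (∑ j ∈ Finset.range n, d j ω) ^ 2) μ := fun n =>
    .of_bound ((hS n).pow_const 2).aestronglyMeasurable ((n : ℝ) ^ 2) (ae_of_all _ fun ω => by
      rw [Real.norm_eq_abs, abs_pow]
      refine pow_le_pow_left₀ (abs_nonneg _) ?_ 2
      exact (Finset.abs_sum_le_sum_abs _ _).trans <|
        (Finset.sum_le_sum fun j _ => hd1 j ω).trans_eq (by simp))
  refine ae_eq_zero_of_tendsto_of_integral_sq_le (c := fun n => 1 / n)
    (fun n => (hS n).div_const _) (fun n => by simpa only [div_pow] using (hSint n).div_const _)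
    (fun n => ?_) tendsto_one_div_atTop_nhds_zero_nat hlim
  simp_rw [div_pow]
  rw [integral_div]
  calc (∫ ω, (∑ j ∈ Finset.range n, d j ω) ^ 2 ∂μ) / (n : ℝ) ^ 2 ≤ n / (n : ℝ) ^ 2 :=
        div_le_div_of_nonneg_right (integral_sq_sum_le_of_orthogonal hd hd1 horth n)
          (sq_nonneg _)
    _ = 1 / n := by
        rcases eq_or_ne (n : ℝ) 0 with h | h
        · simp [h]
        · field_simp

end orthogonalSequence

namespace IsRCD

variable {G : MeasurableSpace S} [mS : MeasurableSpace S] {ν : Measure S}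
  {K : S → Measure S}

lemma bind_restrict (hK : IsRCD ν K G) {g : Set S} (hg : MeasurableSet[G] g) :
    (ν.restrict g).bind K = ν.restrict g := by
  ext A hA
  rw [Measure.bind_apply hA hK.2.1.aemeasurable, Measure.restrict_apply hA,
    hK.2.2.2.2 A hA g hg]

lemma bind_self (hK : IsRCD ν K G) : ν.bind K = ν := by
  simpa using hK.bind_restrict (@MeasurableSet.univ S G)

lemma ae_lintegral_eq [IsFiniteMeasure ν] (hK : IsRCD ν K G) {f : S → ℝ≥0∞}
    (hf : Measurable[G] f) : ∀ᵐ x ∂ν, ∫⁻ y, f y ∂K x = f x := by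
  have hKG : Measurable[G] K :=
    @Measure.measurable_of_measurable_coe S S mS G K fun A hA => hK.2.2.2.1 A hA
  have hKf : Measurable[G] fun x => ∫⁻ y, f y ∂K x :=
    (Measure.measurable_lintegral (hf.mono hK.1 le_rfl)).comp hKG
  refine ae_eq_of_ae_eq_trim (hm := hK.1) <|
    ae_eq_of_forall_setLIntegral_eq_of_sigmaFinite hKf hf fun g hg _ => ?_
  rw [restrict_trim hK.1 ν hg, lintegral_trim hK.1 hKf, lintegral_trim hK.1 hf,
    ← Measure.lintegral_bind hK.2.1.aemeasurable (hf.mono hK.1 le_rfl).aemeasurable,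
    hK.bind_restrict hg]

lemma ae_lintegral_apply_eq [IsFiniteMeasure ν] (hK : IsRCD ν K G) {A : Set S}
    (hA : MeasurableSet A) : ∀ᵐ x ∂ν, ∫⁻ y, K y A ∂K x = K x A :=
  hK.ae_lintegral_eq (hK.2.2.2.1 A hA)

end IsRCD

def predMeasure [MeasurableSpace S] (X : ℕ → Ω → S) (ν : Measure S) (θ : ℝ)
    (K : S → Measure S) (n : ℕ) (ω : Ω) : Measure S :=
  ((n : ℝ≥0∞) + ENNReal.ofReal θ)⁻¹ • (ENNReal.ofReal θ • ν + ∑ i ∈ Finset.range n, K (X i ω))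

section predMeasure

variable [MeasurableSpace S] {X : ℕ → Ω → S} {ν : Measure S} {θ : ℝ} {K : S → Measure S}

lemma predMeasure_apply (n : ℕ) (ω : Ω) (B : Set S) :
    predMeasure X ν θ K n ω B = ((n : ℝ≥0∞) + ENNReal.ofReal θ)⁻¹ *
      (ENNReal.ofReal θ * ν B + ∑ i ∈ Finset.range n, K (X i ω) B) := by
  simp [predMeasure, mul_add]

lemma lintegral_predMeasure (n : ℕ) (ω : Ω) (f : S → ℝ≥0∞) :
    ∫⁻ x, f x ∂predMeasure X ν θ K n ω = ((n : ℝ≥0∞) + ENNReal.ofReal θ)⁻¹ *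
      (ENNReal.ofReal θ * ∫⁻ x, f x ∂ν + ∑ i ∈ Finset.range n, ∫⁻ x, f x ∂K (X i ω)) := by
  simp [predMeasure, mul_add]

lemma measurable_predMeasure [MeasurableSpace Ω] (hX : ∀ n, Measurable (X n))
    (hK : Measurable K) (n : ℕ) : Measurable (predMeasure X ν θ K n) :=
  Measure.measurable_of_measurable_coe _ fun B hB => by
    simp_rw [predMeasure_apply]
    exact measurable_const.mul <| measurable_const.add <|
      Finset.measurable_sum _ fun i _ => (Measure.measurable_coe hB).comp (hK.comp (hX i))

lemma isProbabilityMeasure_predMeasure [IsProbabilityMeasure ν] (hθ : 0 < θ)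
    (hK : ∀ x, IsProbabilityMeasure (K x)) (n : ℕ) (ω : Ω) :
    IsProbabilityMeasure (predMeasure X ν θ K n ω) := by
  constructor
  rw [predMeasure_apply]
  simp only [measure_univ, mul_one, Finset.sum_const, Finset.card_range, nsmul_eq_mul]
  rw [add_comm, ENNReal.inv_mul_cancel (by positivity) (by simp)]

lemma toReal_predMeasure_apply [IsFiniteMeasure ν] (hθ : 0 < θ)
    (hK : ∀ x, IsFiniteMeasure (K x)) (n : ℕ) (ω : Ω) (B : Set S) :
    (predMeasure X ν θ K n ω B).toReal = predReal X ν θ K n ω B := by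
  have hpos : (0 : ℝ) < n + θ := by positivity
  rw [predMeasure_apply, predReal, ENNReal.toReal_mul, ENNReal.toReal_inv,
    ENNReal.toReal_add (by simp) ENNReal.ofReal_ne_top, ENNReal.toReal_add
      (ENNReal.mul_ne_top ENNReal.ofReal_ne_top (measure_ne_top _ _))
      (ENNReal.sum_ne_top.2 fun i _ => measure_ne_top _ _), ENNReal.toReal_mul,
    ENNReal.toReal_sum fun i _ => measure_ne_top _ _]
  simp [hθ.le, div_eq_inv_mul]

end predMeasure

def kernelGap [MeasurableSpace S] (K : S → Measure S) (A : Set S) (x : S) : ℝ :=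
  (K x A).toReal - A.indicator (fun _ => 1) x

section kernelGap

variable [MeasurableSpace S] {K : S → Measure S} {A : Set S}

lemma measurable_kernelGap (hK : Measurable K) (hA : MeasurableSet A) :
    Measurable (kernelGap K A) :=
  ((Measure.measurable_coe hA).comp hK).ennreal_toReal.sub (measurable_const.indicator hA)

lemma abs_kernelGap_le (hK : ∀ x, IsProbabilityMeasure (K x)) (x : S) :
    |kernelGap K A x| ≤ 1 := by
  have h1 : (K x A).toReal ≤ 1 := measureReal_le_one
  have h2 : A.indicator (fun _ => (1 : ℝ)) x ≤ 1 :=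
    Set.indicator_le_self' (fun _ _ => zero_le_one) x
  have h3 : 0 ≤ A.indicator (fun _ => (1 : ℝ)) x :=
    Set.indicator_nonneg (fun _ _ => zero_le_one) x
  rw [kernelGap, abs_le]
  constructor <;> linarith [ENNReal.toReal_nonneg (a := K x A)]

lemma integrable_kernelGap_comp [MeasurableSpace Ω] {P : Measure Ω} [IsFiniteMeasure P]
    (hK : Measurable K) (hKp : ∀ x, IsProbabilityMeasure (K x)) (hA : MeasurableSet A)
    {Y : Ω → S} (hY : Measurable Y) : Integrable (fun ω => kernelGap K A (Y ω)) P :=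
  .of_bound ((measurable_kernelGap hK hA).comp hY).aestronglyMeasurable 1
    (ae_of_all _ fun _ => abs_kernelGap_le hKp _)

end kernelGap

lemma measurable_filtr [MeasurableSpace S] {X : ℕ → Ω → S} {i n : ℕ} (h : i < n) :
    Measurable[Filtr X n] (X i) :=
  Measurable.of_comap_le (le_iSup (fun j : Fin n => MeasurableSpace.comap (X j) _) ⟨i, h⟩)

section Cond11

variable {G : MeasurableSpace S} [mΩ : MeasurableSpace Ω] [mS : MeasurableSpace S]
  {P : Measure Ω} [IsProbabilityMeasure P] {X : ℕ → Ω → S} {ν : Measure S}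
  [IsProbabilityMeasure ν] {θ : ℝ} {K : S → Measure S} {A : Set S}

lemma filtr_le (hX : ∀ n, Measurable (X n)) (n : ℕ) : Filtr X n ≤ mΩ :=
  iSup_le fun i => (hX i).comap_le

lemma Cond11.restrict_map_eq_bind (hc : Cond11 P X ν θ K) (hθ : 0 < θ) (hK : Measurable K)
    (hKp : ∀ x, IsProbabilityMeasure (K x)) {n : ℕ} (hn : 1 ≤ n) {s : Set Ω}
    (hs : MeasurableSet[Filtr X n] s) :
    (P.restrict s).map (X n) = (P.restrict s).bind (predMeasure X ν θ K n) := by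
  have hle := filtr_le hc.1 n
  have hmeas := measurable_predMeasure (ν := ν) (θ := θ) hc.1 hK n
  have hprob : ∀ ω, IsProbabilityMeasure (predMeasure X ν θ K n ω) :=
    isProbabilityMeasure_predMeasure hθ hKp n
  ext B hB
  have hpred : ∫ ω in s, predReal X ν θ K n ω B ∂P = (P.restrict s).real (X n ⁻¹' B) := by
    rw [← setIntegral_congr_ae (hle s hs) ((hc.2.2 n hn B hB).mono fun _ h _ => h),
      setIntegral_condExp hle ((integrable_const 1).indicator (hc.1 n hB)) hs]
    exact integral_indicator_one (hc.1 n hB)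
  have hfin : ∫⁻ ω in s, predMeasure X ν θ K n ω B ∂P ≠ ∞ :=
    ne_top_of_le_ne_top (measure_ne_top P s) <|
      (setLIntegral_mono measurable_const fun ω _ => prob_le_one).trans_eq (by simp)
  have hmB : Measurable fun ω => predMeasure X ν θ K n ω B :=
    (Measure.measurable_coe hB).comp hmeas
  rw [Measure.map_apply (hc.1 n) hB, Measure.bind_apply hB hmeas.aemeasurable,
    ← ENNReal.toReal_eq_toReal_iff' (measure_ne_top _ _) hfin,
    ← integral_toReal hmB.aemeasurable (ae_of_all _ fun _ => measure_lt_top _ _)]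
  simp_rw [toReal_predMeasure_apply hθ (fun x => inferInstance), hpred]
  rfl

lemma Cond11.map_eq_s9 (hc : Cond11 P X ν θ K) (hθ : 0 < θ) (hG : IsRCD ν K G) (n : ℕ) :
    P.map (X n) = ν := by
  induction n using Nat.strong_induction_on with
  | _ n ih =>
  rcases Nat.eq_zero_or_pos n with rfl | hn
  · exact hc.2.1
  have hmap := hc.restrict_map_eq_bind hθ hG.2.1 hG.2.2.1 hn MeasurableSet.univ
  rw [Measure.restrict_univ] at hmap
  ext B hB
  have hKB : ∀ i < n, ∫⁻ ω, K (X i ω) B ∂P = ν B := fun i hi => by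
    rw [← lintegral_map (f := fun x => K x B) ((Measure.measurable_coe hB).comp hG.2.1) (hc.1 i),
      ih i hi, ← Measure.bind_apply hB hG.2.1.aemeasurable, hG.bind_self]
  have hmeas : ∀ i, Measurable fun ω => K (X i ω) B := fun i =>
    (Measure.measurable_coe hB).comp (hG.2.1.comp (hc.1 i))
  simp_rw [hmap, Measure.bind_apply hB (measurable_predMeasure hc.1 hG.2.1 n).aemeasurable,
    predMeasure_apply]
  have hsum : Measurable fun ω => ENNReal.ofReal θ * ν B + ∑ i ∈ Finset.range n, K (X i ω) B :=
    measurable_const.add (Finset.measurable_sum _ fun i _ => hmeas i)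
  rw [lintegral_const_mul _ hsum,
    lintegral_add_left measurable_const, lintegral_finsetSum _ fun i _ => hmeas i,
    Finset.sum_congr rfl fun i hi => hKB i (Finset.mem_range.1 hi)]
  simp only [lintegral_const, measure_univ, mul_one, Finset.sum_const, Finset.card_range,
    nsmul_eq_mul]
  rw [← add_mul, add_comm, ← mul_assoc, ENNReal.inv_mul_cancel (by positivity) (by simp),
    one_mul]

lemma Cond11.ae_lintegral_predMeasure (hc : Cond11 P X ν θ K) (hθ : 0 < θ) (hG : IsRCD ν K G)
    (hA : MeasurableSet A) (n : ℕ) :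
    ∀ᵐ ω ∂P, ∫⁻ y, K y A ∂predMeasure X ν θ K n ω = predMeasure X ν θ K n ω A := by
  have hidem : ∀ i, ∀ᵐ ω ∂P, ∫⁻ y, K y A ∂K (X i ω) = K (X i ω) A := fun i =>
    ae_of_ae_map (hc.1 i).aemeasurable <| (hc.map_eq_s9 hθ hG i).symm ▸ hG.ae_lintegral_apply_eq hA
  filter_upwards [ae_all_iff.2 hidem] with ω hω
  rw [lintegral_predMeasure, predMeasure_apply, ← Measure.bind_apply hA hG.2.1.aemeasurable,
    hG.bind_self]
  simp only [hω]

lemma Cond11.setLIntegral_kernel_eq (hc : Cond11 P X ν θ K) (hθ : 0 < θ) (hG : IsRCD ν K G)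
    (hA : MeasurableSet A) {n : ℕ} (hn : 1 ≤ n) {s : Set Ω}
    (hs : MeasurableSet[Filtr X n] s) :
    ∫⁻ ω in s, K (X n ω) A ∂P = P (X n ⁻¹' A ∩ s) := by
  have hmap := hc.restrict_map_eq_bind hθ hG.2.1 hG.2.2.1 hn hs
  have hmeas := measurable_predMeasure (ν := ν) (θ := θ) hc.1 hG.2.1 n
  have hKA : Measurable fun x => K x A := (Measure.measurable_coe hA).comp hG.2.1
  rw [← lintegral_map hKA (hc.1 n), hmap,
    Measure.lintegral_bind hmeas.aemeasurable hKA.aemeasurable,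
    lintegral_congr_ae (ae_restrict_of_ae (hc.ae_lintegral_predMeasure hθ hG hA n)),
    ← Measure.bind_apply hA hmeas.aemeasurable, ← hmap,
    Measure.map_apply (hc.1 n) hA, Measure.restrict_apply (hc.1 n hA)]

lemma Cond11.setIntegral_kernelGap (hc : Cond11 P X ν θ K) (hθ : 0 < θ) (hG : IsRCD ν K G)
    (hA : MeasurableSet A) {n : ℕ} (hn : 1 ≤ n) {s : Set Ω} (hs : MeasurableSet[Filtr X n] s) :
    ∫ ω in s, kernelGap K A (X n ω) ∂P = 0 := by
  have := hG.2.2.1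
  have hKA : Measurable fun ω => K (X n ω) A :=
    (Measure.measurable_coe hA).comp (hG.2.1.comp (hc.1 n))
  have hKA_int : Integrable (fun ω => (K (X n ω) A).toReal) P :=
    .of_bound hKA.ennreal_toReal.aestronglyMeasurable 1 (ae_of_all _ fun _ => by
      rw [Real.norm_of_nonneg ENNReal.toReal_nonneg]; exact measureReal_le_one)
  have hind : ∀ ω, A.indicator (fun _ => (1 : ℝ)) (X n ω) = (X n ⁻¹' A).indicator (fun _ => 1) ω :=
    fun ω => by by_cases h : X n ω ∈ A <;> simp [h]
  simp only [kernelGap, hind]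
  rw [integral_sub hKA_int.integrableOn ((integrable_const 1).indicator (hc.1 n hA)).integrableOn,
    integral_toReal hKA.aemeasurable.restrict (ae_of_all _ fun _ => measure_lt_top _ _),
    hc.setLIntegral_kernel_eq hθ hG hA hn hs, integral_indicator (hc.1 n hA), setIntegral_const,
    smul_eq_mul, mul_one, measureReal_restrict_apply (hc.1 n hA), Measure.real, sub_self]

lemma Cond11.integral_kernelGap_mul (hc : Cond11 P X ν θ K) (hθ : 0 < θ) (hG : IsRCD ν K G)
    (hA : MeasurableSet A) {i n : ℕ} (hin : i < n) :
    ∫ ω, kernelGap K A (X i ω) * kernelGap K A (X n ω) ∂P = 0 :=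
  integral_mul_eq_zero_of_setIntegral_eq_zero (filtr_le hc.1 n)
    (integrable_kernelGap_comp hG.2.1 hG.2.2.1 hA (hc.1 n))
    ((measurable_kernelGap hG.2.1 hA).comp (measurable_filtr hin)).stronglyMeasurable
    ((integrable_kernelGap_comp hG.2.1 hG.2.2.1 hA (hc.1 n)).bdd_mul
      ((measurable_kernelGap hG.2.1 hA).comp (hc.1 i)).aestronglyMeasurable
      (ae_of_all _ fun _ => abs_kernelGap_le hG.2.2.1 _))
    fun _ hs => hc.setIntegral_kernelGap hθ hG hA (by omega) hs

end Cond11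

lemma IsDirecting.ae_tendsto_avg [MeasurableSpace Ω] [MeasurableSpace S] {P : Measure Ω}
    {X : ℕ → Ω → S} {μ : Ω → Measure S} (hμ : IsDirecting P X μ) {H : S → ℝ} (hH : Measurable H)
    (h0 : ∀ y, 0 ≤ H y) (h1 : ∀ y, H y ≤ 1) :
    ∀ᵐ ω ∂P, Tendsto (fun n : ℕ => (∑ i ∈ Finset.range n, H (X i ω)) / n) atTop
      (nhds (∫ y, H y ∂μ ω)) := by
  filter_upwards [ae_all_iff.2 fun q : ℚ => hμ.2.2 _ (measurableSet_le measurable_const hH)]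
    with ω hω
  have := hμ.2.1 ω
  exact tendsto_avg_of_tendsto_avg_indicator hH h0 h1 hω

section kernelAverage

variable {G : MeasurableSpace S} [MeasurableSpace Ω] {mS : MeasurableSpace S} {P : Measure Ω}
  {X : ℕ → Ω → S} {ν : Measure S} {θ : ℝ} {K : S → Measure S} {μ : Ω → Measure S} {A : Set S}

lemma IsDirecting.ae_tendsto_avg_kernel (hμ : IsDirecting P X μ) (hG : IsRCD ν K G)
    (hA : MeasurableSet A) :
    ∀ᵐ ω ∂P, Tendsto (fun n : ℕ => (∑ i ∈ Finset.range n, (K (X i ω) A).toReal) / n) atTop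
      (nhds (∫ x, (K x A).toReal ∂μ ω)) :=
  have := hG.2.2.1
  hμ.ae_tendsto_avg ((Measure.measurable_coe hA).comp hG.2.1).ennreal_toReal
    (fun _ => ENNReal.toReal_nonneg) (fun _ => measureReal_le_one)

variable [IsProbabilityMeasure P] [IsProbabilityMeasure ν]

lemma Cond11.ae_integral_kernel_eq (hc : Cond11 P X ν θ K) (hθ : 0 < θ) (hG : IsRCD ν K G)
    (hμ : IsDirecting P X μ) (hA : MeasurableSet A) :
    ∀ᵐ ω ∂P, ∫ x, (K x A).toReal ∂μ ω = (μ ω A).toReal := by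
  have hgap : (fun ω => ∫ x, (K x A).toReal ∂μ ω - (μ ω A).toReal) =ᵐ[P] 0 := by
    refine ae_eq_zero_of_tendsto_avg_of_orthogonal (d := fun j ω => kernelGap K A (X j ω))
      (fun j => (measurable_kernelGap hG.2.1 hA).comp (hc.1 j))
      (fun j ω => abs_kernelGap_le hG.2.2.1 _)
      (fun i j hij => hc.integral_kernelGap_mul hθ hG hA hij) ?_
    filter_upwards [hμ.ae_tendsto_avg_kernel hG hA, hμ.2.2 A hA] with ω h1 h2
    simpa only [kernelGap, Finset.sum_sub_distrib, _root_.sub_div] using h1.sub h2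
  filter_upwards [hgap] with ω h
  exact sub_eq_zero.1 h

lemma Cond11.ae_tendsto_avg_kernel (hc : Cond11 P X ν θ K) (hθ : 0 < θ) (hG : IsRCD ν K G)
    (hμ : IsDirecting P X μ) (hA : MeasurableSet A) :
    ∀ᵐ ω ∂P, Tendsto (fun n : ℕ => (∑ i ∈ Finset.range n, (K (X i ω) A).toReal) / n) atTop
      (nhds (μ ω A).toReal) := by
  filter_upwards [hμ.ae_tendsto_avg_kernel hG hA, hc.ae_integral_kernel_eq hθ hG hμ hA]
    with ω hlim h
  rwa [h] at hlim

lemma Cond11.ae_lintegral_kernel_eq (hc : Cond11 P X ν θ K) (hθ : 0 < θ) (hG : IsRCD ν K G)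
    (hμ : IsDirecting P X μ) (hA : MeasurableSet A) :
    ∀ᵐ ω ∂P, ∫⁻ x, K x A ∂μ ω = μ ω A := by
  have := hG.2.2.1
  have hKA : Measurable fun x => K x A := (Measure.measurable_coe hA).comp hG.2.1
  filter_upwards [hc.ae_integral_kernel_eq hθ hG hμ hA] with ω h
  have := hμ.2.1 ω
  have hfin : ∫⁻ x, K x A ∂μ ω ≠ ∞ :=
    ((lintegral_mono fun _ => prob_le_one).trans_lt (by simp)).ne
  rw [integral_toReal hKA.aemeasurable (ae_of_all _ fun _ => measure_lt_top _ _)] at h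
  exact (ENNReal.toReal_eq_toReal_iff' hfin (measure_ne_top _ _)).1 h

end kernelAverage

theorem stmt_9_general {Ω S : Type*} [MeasurableSpace Ω] [mS : MeasurableSpace S]
    (P : Measure Ω) [IsProbabilityMeasure P] (X : ℕ → Ω → S) (ν : Measure S)
    [IsProbabilityMeasure ν] (θ : ℝ) (hθ : 0 < θ) (K : S → Measure S)
    (hL : MemL P X ν θ K) (μ : Ω → Measure S) (hμ : IsDirecting P X μ) :
    ∀ A : Set S, MeasurableSet A →
      (∀ᵐ ω ∂P, Tendsto
          (fun n : ℕ => (∑ i ∈ Finset.range n, (K (X i ω) A).toReal) / n)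
          atTop (nhds ((μ ω A).toReal))) ∧
        ∀ᵐ ω ∂P, ∫⁻ x, K x A ∂(μ ω) = μ ω A := by
  intro A hA
  obtain ⟨hc, G, hG⟩ := hL
  exact ⟨hc.ae_tendsto_avg_kernel hθ hG hμ hA, hc.ae_lintegral_kernel_eq hθ hG hμ hA⟩

theorem stmt_9 {Ω S : Type*} [MeasurableSpace Ω] [mS : MeasurableSpace S] [StandardBorelSpace S]
    (P : Measure Ω) [IsProbabilityMeasure P] (X : ℕ → Ω → S) (ν : Measure S)
    [IsProbabilityMeasure ν] (θ : ℝ) (hθ : 0 < θ) (K : S → Measure S)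
    (hL : MemL P X ν θ K) (μ : Ω → Measure S) (hμ : IsDirecting P X μ) :
    ∀ A : Set S, MeasurableSet A →
      (∀ᵐ ω ∂P, Tendsto
          (fun n : ℕ => (∑ i ∈ Finset.range n, (K (X i ω) A).toReal) / n)
          atTop (nhds ((μ ω A).toReal))) ∧
        ∀ᵐ ω ∂P, ∫⁻ x, K x A ∂(μ ω) = μ ω A :=
  stmt_9_general (mS := mS) P X ν θ hθ K hL μ hμ
end
end
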